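/- For each semantics σ ∈ {naive, stb, stage, pref, sem} and every n ∈ ℕ: σ_max(n) = 1 if n = 0 or n = 1; σ_max(n) = 3^s if n ≥ 2 and n = 3s; σ_max(n) = 4·3^{s−1} if n ≥ 2 and n = 3s+1; σ_max(n) = 2·3^s if n ≥ 2 and n = 3s+2. -/

import Mathlib

structure AF where
  A : Finset ℕ
  R : Set (ℕ × ℕ)
  R_sub : ∀ p ∈ R, p.1 ∈ A ∧ p.2 ∈ A

namespace AF

def cf (F : AF) : Set (Set ℕ) :=
  {S | S ⊆ ↑F.A ∧ ∀ a ∈ S, ∀ b ∈ S, (a, b) ∉ F.R}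

def defends (F : AF) (S : Set ℕ) (a : ℕ) : Prop :=
  ∀ b, (b, a) ∈ F.R → ∃ s ∈ S, (s, b) ∈ F.R

def adm (F : AF) : Set (Set ℕ) :=
  {S | S ∈ F.cf ∧ ∀ a ∈ S, F.defends S a}

def rng (F : AF) (S : Set ℕ) : Set ℕ :=
  S ∪ {b | ∃ s ∈ S, (s, b) ∈ F.R}

def naive (F : AF) : Set (Set ℕ) :=
  {S | S ∈ F.cf ∧ ∀ T ∈ F.cf, S ⊆ T → S = T}

def stb (F : AF) : Set (Set ℕ) :=
  {S | S ∈ F.cf ∧ ∀ a ∈ F.A, a ∉ S → ∃ s ∈ S, (s, a) ∈ F.R}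

def pref (F : AF) : Set (Set ℕ) :=
  {S | S ∈ F.adm ∧ ∀ T ∈ F.adm, S ⊆ T → S = T}

def stage (F : AF) : Set (Set ℕ) :=
  {S | S ∈ F.cf ∧ ¬ ∃ T ∈ F.cf, F.rng S ⊂ F.rng T}

def sem (F : AF) : Set (Set ℕ) :=
  {S | S ∈ F.adm ∧ ¬ ∃ T ∈ F.adm, F.rng S ⊂ F.rng T}

end AF

abbrev Semantics := AF → Set (Set ℕ)

def StandardSemantics : Set Semantics :=
  {AF.naive, AF.stb, AF.stage, AF.pref, AF.sem}

def AFCompact (σ : Semantics) (F : AF) : Prop :=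
  ∀ a ∈ F.A, ∃ S ∈ σ F, a ∈ S

def CAF (σ : Semantics) : Set AF := {F | AFCompact σ F}

def ArgS (𝕊 : Set (Set ℕ)) : Set ℕ := ⋃₀ 𝕊

def PairsS (𝕊 : Set (Set ℕ)) : Set (ℕ × ℕ) :=
  {p | ∃ S ∈ 𝕊, p.1 ∈ S ∧ p.2 ∈ S}

def IsExtensionSet (𝕊 : Set (Set ℕ)) : Prop := (ArgS 𝕊).Finite

def AFStep (F : AF) (a b : ℕ) : Prop := (a, b) ∈ F.R ∨ (b, a) ∈ F.R

def AFConnected (F : AF) : Prop :=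
  ∀ a ∈ F.A, ∀ b ∈ F.A, Relation.ReflTransGen (AFStep F) a b

def sameComp (F : AF) (a b : ℕ) : Prop := Relation.ReflTransGen (AFStep F) a b

def comps (F : AF) : Set (Set ℕ) :=
  {K | ∃ a ∈ F.A, K = {b ∈ (↑F.A : Set ℕ) | sameComp F a b}}

def nopairs (𝕊 : Set (Set ℕ)) (a b : ℕ) : Prop :=
  a ∈ ArgS 𝕊 ∧ b ∈ ArgS 𝕊 ∧ (a, b) ∉ PairsS 𝕊

def compsS (𝕊 : Set (Set ℕ)) : Set (Set ℕ) :=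
  {K | ∃ a ∈ ArgS 𝕊, K = {b ∈ ArgS 𝕊 | Relation.ReflTransGen (nopairs 𝕊) a b}}

noncomputable def sigmaMax (σ : Semantics) (n : ℕ) : ℕ :=
  sSup {k | ∃ F : AF, F.A.card = n ∧ (σ F).ncard = k}

noncomputable def sigmaMaxCon (σ : Semantics) (n : ℕ) : ℕ :=
  sSup {k | ∃ F : AF, F.A.card = n ∧ AFConnected F ∧ (σ F).ncard = k}

noncomputable def sigmaMax2 (σ : Semantics) (n : ℕ) : ℕ :=
  sSup ({k | ∃ F : AF, F.A.card = n ∧ (σ F).ncard = k} \ {sigmaMax σ n})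

def cfSet (𝕊 : Set (Set ℕ)) : Set (Set ℕ) :=
  {S | S ⊆ ArgS 𝕊 ∧ ∀ a ∈ S, ∀ b ∈ S, (a, b) ∈ PairsS 𝕊}

def plusSet (𝕊 : Set (Set ℕ)) : Set (Set ℕ) :=
  {S | S ∈ cfSet 𝕊 ∧ ∀ T ∈ cfSet 𝕊, S ⊆ T → S = T}

def minusSet (𝕊 : Set (Set ℕ)) : Set (Set ℕ) := plusSet 𝕊 \ 𝕊

def Sig (σ : Semantics) : Set (Set (Set ℕ)) := {𝕊 | ∃ F : AF, σ F = 𝕊}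

def cSig (σ : Semantics) : Set (Set (Set ℕ)) :=
  {𝕊 | ∃ F : AF, AFCompact σ F ∧ σ F = 𝕊}

def Pcon (σ : Semantics) (n : ℕ) : Set ℕ :=
  {k | ∃ F : AF, AFCompact σ F ∧ AFConnected F ∧ F.A.card = n ∧ (σ F).ncard = k}

open Classical in
noncomputable def restrictAF (F : AF) (K : Set ℕ) : AF where
  A := F.A.filter (fun a => a ∈ K)
  R := {p | p ∈ F.R ∧ p.1 ∈ K ∧ p.2 ∈ K}
  R_sub := fun p hp => by
    have h := F.R_sub p hp.1
    simp only [Finset.mem_filter]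
    exact ⟨⟨h.1, hp.2.1⟩, ⟨h.2, hp.2.2⟩⟩

def IsExclusionMapping (𝕊 : Set (Set ℕ)) (Rm : Set (ℕ × ℕ)) : Prop :=
  ∃ f : Set ℕ → ℕ,
    (∀ S ∈ minusSet 𝕊, f S ∈ ArgS 𝕊 ∧ f S ∉ S) ∧
    Rm = {p | ∃ S ∈ minusSet 𝕊, p.1 ∈ S ∧ p.2 = f S ∧ p ∉ PairsS 𝕊}

def Independent (𝕊 : Set (Set ℕ)) : Prop :=
  ∃ Rm : Set (ℕ × ℕ), IsExclusionMapping 𝕊 Rm ∧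
    (∀ a b, (a, b) ∈ Rm → (b, a) ∈ Rm → a = b) ∧
    ∀ S ∈ 𝕊, ∀ a ∈ ArgS 𝕊 \ S, ∃ s ∈ S, (s, a) ∉ Rm ∪ PairsS 𝕊

def ConflictExplicit (σ : Semantics) (F : AF) : Prop :=
  ∀ a ∈ F.A, ∀ b ∈ F.A, (a, b) ∉ PairsS (σ F) → (a, b) ∈ F.R ∨ (b, a) ∈ F.R

noncomputable def canonicalCF (𝕊 : Set (Set ℕ)) (h : IsExtensionSet 𝕊) : AF where
  A := h.toFinset
  R := {p | p.1 ∈ ArgS 𝕊 ∧ p.2 ∈ ArgS 𝕊 ∧ p ∉ PairsS 𝕊}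
  R_sub := fun p hp => by
    exact ⟨(Set.Finite.mem_toFinset (h : (ArgS 𝕊).Finite)).2 hp.1,
      (Set.Finite.mem_toFinset (h : (ArgS 𝕊).Finite)).2 hp.2.1⟩

/-!
Every extension under a standard semantics extends to a naive one, and two extensions whose union
is conflict-free coincide, so `σ F` injects into `F.naive`. Naive extensions are the maximal
independent sets of the underlying undirected graph once self-attacking arguments are removed, so
the Moon–Moser bound `moonMoser n` applies. It is attained by a disjoint union of cliques, one of
size `1`, `2`, `3` or `4` and the others of size `3`: there all five semantics agree and their
extensions are the transversals of the cliques.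
-/

def moonMoser : ℕ → ℕ
  | 0 => 1
  | 1 => 1
  | 2 => 2
  | 3 => 3
  | 4 => 4
  | n + 5 => 3 * moonMoser (n + 2)

lemma moonMoser_add_three {n : ℕ} (hn : 2 ≤ n) : moonMoser (n + 3) = 3 * moonMoser n := by
  obtain ⟨k, rfl⟩ : ∃ k, n = k + 2 := ⟨n - 2, by omega⟩
  rfl

lemma three_mul_moonMoser_le (n : ℕ) : 3 * moonMoser n ≤ moonMoser (n + 3) := by
  rcases lt_or_ge n 2 with hn | hn
  · interval_cases n <;> decide
  · exact (moonMoser_add_three hn).ge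

/-- Holds because `d ↦ d * 3 ^ (-d / 3)` is maximal at `d = 3`. -/
lemma mul_moonMoser_le (d m : ℕ) (hd : 1 ≤ d) : d * moonMoser m ≤ moonMoser (m + d) := by
  induction m using Nat.strong_induction_on generalizing d with
  | _ m ihm =>
  rcases lt_or_ge m 5 with hm | hm
  · induction d using Nat.strong_induction_on with
    | _ d ihd =>
    rcases lt_or_ge d 5 with hd5 | hd5
    · interval_cases m <;> interval_cases d <;> decide
    · obtain ⟨e, rfl⟩ : ∃ e, d = e + 3 := ⟨d - 3, by omega⟩
      calc (e + 3) * moonMoser m ≤ 3 * (e * moonMoser m) := by nlinarith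
        _ ≤ 3 * moonMoser (m + e) := by gcongr; exact ihd e (by omega) (by omega)
        _ ≤ moonMoser (m + (e + 3)) := by
          rw [← add_assoc]; exact three_mul_moonMoser_le _
  · obtain ⟨k, rfl⟩ : ∃ k, m = k + 3 := ⟨m - 3, by omega⟩
    calc d * moonMoser (k + 3) = 3 * (d * moonMoser k) := by
          rw [moonMoser_add_three (by omega)]; ring
      _ ≤ 3 * moonMoser (k + d) := by gcongr; exact ihm k (by omega) d hd
      _ = moonMoser (k + 3 + d) := by
          rw [add_right_comm, moonMoser_add_three (by omega)]

lemma moonMoser_monotone : Monotone moonMoser :=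
  monotone_nat_of_le_succ fun n => by simpa using mul_moonMoser_le 1 n le_rfl

lemma moonMoser_three_mul {s : ℕ} (hs : s ≠ 0) : moonMoser (3 * s) = 3 ^ s := by
  obtain ⟨t, rfl⟩ := Nat.exists_eq_add_one_of_ne_zero hs
  clear hs
  induction t with
  | zero => rfl
  | succ t ih =>
    rw [show 3 * (t + 1 + 1) = 3 * (t + 1) + 3 by ring, moonMoser_add_three (by omega), ih,
      pow_succ 3 (t + 1), mul_comm]

lemma moonMoser_three_mul_add_one {s : ℕ} (hs : s ≠ 0) :
    moonMoser (3 * s + 1) = 4 * 3 ^ (s - 1) := by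
  obtain ⟨t, rfl⟩ := Nat.exists_eq_add_one_of_ne_zero hs
  clear hs
  rw [Nat.add_sub_cancel]
  induction t with
  | zero => rfl
  | succ t ih =>
    rw [show 3 * (t + 1 + 1) + 1 = 3 * (t + 1) + 1 + 3 by ring, moonMoser_add_three (by omega),
      ih, pow_succ]
    ring

lemma moonMoser_three_mul_add_two (s : ℕ) : moonMoser (3 * s + 2) = 2 * 3 ^ s := by
  induction s with
  | zero => rfl
  | succ s ih =>
    rw [mul_add_one, add_right_comm, moonMoser_add_three (by omega), ih, pow_succ]
    ring

lemma exists_moonMoser_eq_mul_pow {n : ℕ} (hn : n ≠ 0) :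
    ∃ r k, r ≠ 0 ∧ r + 3 * k = n ∧ moonMoser n = r * 3 ^ k := by
  induction n using Nat.strong_induction_on with
  | _ n ih =>
  rcases lt_or_ge n 5 with h5 | h5
  · exact ⟨n, 0, hn, by simp, by interval_cases n <;> first | omega | rfl⟩
  · obtain ⟨r, k, hr, hrk, heq⟩ := ih (n - 3) (by omega) (by omega)
    refine ⟨r, k + 1, hr, by omega, ?_⟩
    obtain ⟨m, rfl⟩ : ∃ m, n = m + 3 := ⟨n - 3, by omega⟩
    rw [moonMoser_add_three (by omega), Nat.add_sub_cancel] at *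
    rw [heq, pow_succ]; ring

namespace AF

variable {F : AF} {S T U : Set ℕ} {X : Finset ℕ} {v : ℕ} {σ : Semantics}

lemma cf_mono (h : T ⊆ S) (hS : S ∈ F.cf) : T ∈ F.cf :=
  ⟨h.trans hS.1, fun a ha b hb => hS.2 a (h ha) b (h hb)⟩

lemma cf_finite (F : AF) : F.cf.Finite :=
  (Set.Finite.finite_subsets F.A.finite_toSet).subset fun _ hS => hS.1

lemma naive_finite (F : AF) : F.naive.Finite :=
  F.cf_finite.subset fun _ hS => hS.1

lemma exists_naive_superset (hS : S ∈ F.cf) : ∃ T ∈ F.naive, S ⊆ T := by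
  obtain ⟨T, ⟨hT, hST⟩, hmax⟩ := Set.Finite.exists_maximalFor id _
    (F.cf_finite.subset fun _ h => h.1 : {T | T ∈ F.cf ∧ S ⊆ T}.Finite)
    ⟨S, hS, subset_rfl⟩
  exact ⟨T, ⟨hT, fun U hU hTU => hTU.antisymm (hmax ⟨hU, hST.trans hTU⟩ hTU)⟩, hST⟩

lemma adm_union (hS : S ∈ F.adm) (hT : T ∈ F.adm) (hcf : S ∪ T ∈ F.cf) :
    S ∪ T ∈ F.adm := by
  refine ⟨hcf, ?_⟩
  rintro a (ha | ha) b hb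
  · obtain ⟨s, hs, hr⟩ := hS.2 a ha b hb
    exact ⟨s, Or.inl hs, hr⟩
  · obtain ⟨s, hs, hr⟩ := hT.2 a ha b hb
    exact ⟨s, Or.inr hs, hr⟩

lemma rng_mono (h : S ⊆ T) : F.rng S ⊆ F.rng T := by
  rintro a (ha | ⟨s, hs, hr⟩)
  · exact Or.inl (h ha)
  · exact Or.inr ⟨s, h hs, hr⟩

lemma rng_subset_A (hS : S ⊆ F.A) : F.rng S ⊆ F.A := by
  rintro a (ha | ⟨s, -, hr⟩)
  · exact hS ha
  · exact (F.R_sub _ hr).2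

lemma A_subset_rng_of_mem_stb (hS : S ∈ F.stb) : ↑F.A ⊆ F.rng S := fun a ha =>
  (em (a ∈ S)).elim Or.inl fun haS => Or.inr (hS.2 a ha haS)

lemma subset_of_rng_union_subset (hcf : S ∪ T ∈ F.cf) (h : F.rng (S ∪ T) ⊆ F.rng S) :
    T ⊆ S := by
  intro t ht
  rcases h (Or.inl (Or.inr ht)) with hs | ⟨s, hs, hst⟩
  · exact hs
  · exact absurd hst (hcf.2 s (Or.inl hs) t (Or.inr ht))

lemma rng_subset_of_mem_stb (hS : S ∈ F.stb) (hU : U ⊆ F.A) : F.rng U ⊆ F.rng S :=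
  (rng_subset_A hU).trans (A_subset_rng_of_mem_stb hS)

lemma rng_subset_of_mem_stage (hS : S ∈ F.stage) (hU : U ∈ F.cf) (h : S ⊆ U) :
    F.rng U ⊆ F.rng S :=
  ((rng_mono h).eq_of_not_ssubset fun hlt => hS.2 ⟨U, hU, hlt⟩).ge

lemma rng_subset_of_mem_sem (hS : S ∈ F.sem) (hU : U ∈ F.adm) (h : S ⊆ U) :
    F.rng U ⊆ F.rng S :=
  ((rng_mono h).eq_of_not_ssubset fun hlt => hS.2 ⟨U, hU, hlt⟩).ge

lemma stb_subset_naive (F : AF) : F.stb ⊆ F.naive := fun S hS =>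
  ⟨hS.1, fun T hT hST => by
    have hU : S ∪ T ∈ F.cf := by rwa [Set.union_eq_self_of_subset_left hST]
    exact hST.antisymm (subset_of_rng_union_subset hU (rng_subset_of_mem_stb hS hU.1))⟩

lemma stage_subset_naive (F : AF) : F.stage ⊆ F.naive := fun S hS =>
  ⟨hS.1, fun T hT hST => by
    have hU : S ∪ T ∈ F.cf := by rwa [Set.union_eq_self_of_subset_left hST]
    exact hST.antisymm
      (subset_of_rng_union_subset hU (rng_subset_of_mem_stage hS hU Set.subset_union_left))⟩

lemma stb_subset_stage (F : AF) : F.stb ⊆ F.stage := fun _ hS =>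
  ⟨hS.1, fun ⟨_, hT, hlt⟩ => hlt.2 (rng_subset_of_mem_stb hS hT.1)⟩

lemma adm_eq_cf_of_symm (hsymm : ∀ a b, (a, b) ∈ F.R → (b, a) ∈ F.R) : F.adm = F.cf :=
  Set.ext fun _ => ⟨fun h => h.1, fun h => ⟨h, fun a ha b hb => ⟨a, ha, hsymm b a hb⟩⟩⟩

lemma naive_subset_stb_of_symm (hsymm : ∀ a b, (a, b) ∈ F.R → (b, a) ∈ F.R)
    (hirr : ∀ a, (a, a) ∉ F.R) : F.naive ⊆ F.stb := by
  refine fun S hS => ⟨hS.1, fun a ha haS => ?_⟩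
  by_contra! hna
  have hcf : insert a S ∈ F.cf := by
    refine ⟨Set.insert_subset ha hS.1.1, ?_⟩
    rintro x (rfl | hx) y (rfl | hy) hxy
    · exact hirr y hxy
    · exact hna y hy (hsymm x y hxy)
    · exact hna x hx hxy
    · exact hS.1.2 x hx y hy hxy
  exact haS (hS.2 _ hcf (Set.subset_insert a S) ▸ Set.mem_insert a S)

theorem eq_naive_of_symm {σ : Semantics} (hσ : σ ∈ StandardSemantics)
    (hsymm : ∀ a b, (a, b) ∈ F.R → (b, a) ∈ F.R) (hirr : ∀ a, (a, a) ∉ F.R) :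
    σ F = F.naive := by
  have hstb : F.stb = F.naive := F.stb_subset_naive.antisymm (naive_subset_stb_of_symm hsymm hirr)
  have hstage : F.stage = F.naive :=
    F.stage_subset_naive.antisymm (hstb.ge.trans F.stb_subset_stage)
  rcases hσ with rfl | rfl | rfl | rfl | rfl
  · rfl
  · exact hstb
  · exact hstage
  · simp only [pref, naive, adm_eq_cf_of_symm hsymm]
  · rw [← hstage]; simp only [sem, stage, adm_eq_cf_of_symm hsymm]

lemma subset_cf_of_mem_standard (hσ : σ ∈ StandardSemantics) : σ F ⊆ F.cf := by
  rcases hσ with rfl | rfl | rfl | rfl | rfl <;>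
    exact fun S hS => by first | exact hS.1 | exact hS.1.1

lemma subset_of_union_mem_cf (hσ : σ ∈ StandardSemantics) (hS : S ∈ σ F) (hT : T ∈ σ F)
    (hU : S ∪ T ∈ F.cf) : T ⊆ S := by
  rcases hσ with rfl | rfl | rfl | rfl | rfl
  · exact Set.union_eq_left.1 (hS.2 _ hU Set.subset_union_left).symm
  · exact subset_of_rng_union_subset hU (rng_subset_of_mem_stb hS hU.1)
  · exact subset_of_rng_union_subset hU (rng_subset_of_mem_stage hS hU Set.subset_union_left)
  · exact Set.union_eq_left.1 (hS.2 _ (adm_union hS.1 hT.1 hU) Set.subset_union_left).symm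
  · exact subset_of_rng_union_subset hU
      (rng_subset_of_mem_sem hS (adm_union hS.1 hT.1 hU) Set.subset_union_left)

/-- Sending each extension to a naive superset is injective. -/
theorem ncard_le_ncard_naive (hσ : σ ∈ StandardSemantics) (F : AF) :
    (σ F).ncard ≤ F.naive.ncard := by
  choose! f hf hsub using fun S (hS : S ∈ σ F) =>
    exists_naive_superset (subset_cf_of_mem_standard hσ hS)
  refine Set.ncard_le_ncard_of_injOn f (fun S hS => hf S hS) (fun S hS T hT hST => ?_)
    F.naive_finite
  have hU : S ∪ T ∈ F.cf :=
    cf_mono (Set.union_subset (hsub S hS) (hST ▸ hsub T hT)) (hf S hS).1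
  exact (subset_of_union_mem_cf hσ hT hS (Set.union_comm S T ▸ hU)).antisymm
    (subset_of_union_mem_cf hσ hS hT hU)

noncomputable def del (F : AF) (X : Finset ℕ) : AF := restrictAF F (↑X)ᶜ

open Classical in
noncomputable def closedNbhd (F : AF) (v : ℕ) : Finset ℕ :=
  F.A.filter fun b => b = v ∨ AFStep F v b

lemma del_A (F : AF) (X : Finset ℕ) : (F.del X).A = F.A \ X := by
  ext; simp [del, restrictAF]

lemma card_del_A (hX : X ⊆ F.A) : (F.del X).A.card = F.A.card - X.card := by
  rw [del_A, Finset.card_sdiff_of_subset hX]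

lemma mem_del_R {p : ℕ × ℕ} : p ∈ (F.del X).R ↔ p ∈ F.R ∧ p.1 ∉ X ∧ p.2 ∉ X := by
  simp only [del, restrictAF, Set.mem_ofPred_eq, Set.mem_compl_iff, Finset.mem_coe]

lemma mem_cf_del : S ∈ (F.del X).cf ↔ S ∈ F.cf ∧ ∀ a ∈ S, a ∉ X := by
  simp only [cf, del_A, Finset.coe_sdiff, Set.subset_sdiff, Set.disjoint_left, Set.mem_ofPred_eq,
    mem_del_R, Finset.mem_coe]
  constructor
  · rintro ⟨⟨hA, hX⟩, hR⟩
    exact ⟨⟨hA, fun a ha b hb hab => hR a ha b hb ⟨hab, hX ha, hX hb⟩⟩, hX⟩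
  · rintro ⟨⟨hA, hR⟩, hX⟩
    exact ⟨⟨hA, hX⟩, fun a ha b hb hab => hR a ha b hb hab.1⟩

lemma mem_naive_del (hS : S ∈ F.naive) (hX : ∀ a ∈ S, a ∉ X) : S ∈ (F.del X).naive :=
  ⟨mem_cf_del.2 ⟨hS.1, hX⟩, fun T hT hST => hS.2 T (mem_cf_del.1 hT).1 hST⟩

lemma mem_closedNbhd {b : ℕ} :
    b ∈ F.closedNbhd v ↔ b ∈ F.A ∧ (b = v ∨ AFStep F v b) := by
  simp [closedNbhd]

lemma self_mem_closedNbhd (hv : v ∈ F.A) : v ∈ F.closedNbhd v :=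
  mem_closedNbhd.2 ⟨hv, Or.inl rfl⟩

lemma closedNbhd_subset_A : F.closedNbhd v ⊆ F.A := fun _ hb => (mem_closedNbhd.1 hb).1

lemma insert_mem_cf (hv : v ∈ F.A) (hloop : (v, v) ∉ F.R) (hS : S ∈ F.cf)
    (hSv : ∀ a ∈ S, a ∉ F.closedNbhd v) : insert v S ∈ F.cf := by
  refine ⟨Set.insert_subset hv hS.1, ?_⟩
  rintro x (rfl | hx) y (rfl | hy) hxy
  · exact hloop hxy
  · exact hSv y hy (mem_closedNbhd.2 ⟨(F.R_sub _ hxy).2, Or.inr (Or.inl hxy)⟩)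
  · exact hSv x hx (mem_closedNbhd.2 ⟨(F.R_sub _ hxy).1, Or.inr (Or.inr hxy)⟩)
  · exact hS.2 x hx y hy hxy

lemma notMem_closedNbhd_of_mem_cf (hS : S ∈ F.cf) (hvS : v ∈ S) {a : ℕ} (ha : a ∈ S)
    (hav : a ≠ v) : a ∉ F.closedNbhd v := by
  rintro hnb
  rcases (mem_closedNbhd.1 hnb).2 with h | h | h
  · exact hav h
  · exact hS.2 v hvS a ha h
  · exact hS.2 a ha v hvS h

lemma exists_mem_closedNbhd_of_mem_naive (hv : v ∈ F.A) (hloop : (v, v) ∉ F.R)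
    (hS : S ∈ F.naive) : ∃ w ∈ F.closedNbhd v, w ∈ S := by
  by_contra! h
  have := hS.2 _ (insert_mem_cf hv hloop hS.1 fun a ha hn => h a hn ha) (Set.subset_insert v S)
  exact h v (self_mem_closedNbhd hv) (this ▸ Set.mem_insert v S)

lemma ncard_naive_mem_le_ncard_naive_del (hv : v ∈ F.A) (hloop : (v, v) ∉ F.R) :
    {S | S ∈ F.naive ∧ v ∈ S}.ncard ≤ (F.del (F.closedNbhd v)).naive.ncard := by
  refine Set.ncard_le_ncard_of_injOn (· \ {v}) ?_ ?_ (F.del _).naive_finite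
  · rintro S ⟨hS, hvS⟩
    have hSv : ∀ a ∈ S \ {v}, a ∉ F.closedNbhd v := fun a ha =>
      notMem_closedNbhd_of_mem_cf hS.1 hvS ha.1 ha.2
    refine ⟨mem_cf_del.2 ⟨cf_mono Set.sdiff_subset hS.1, hSv⟩, fun T hT hST => ?_⟩
    obtain ⟨hTcf, hTv⟩ := mem_cf_del.1 hT
    have hS_eq := hS.2 _ (insert_mem_cf hv hloop hTcf hTv) fun a ha =>
      (eq_or_ne a v).elim (fun h => h ▸ Set.mem_insert v T) fun h => Or.inr (hST ⟨ha, h⟩)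
    refine hST.antisymm fun a ha => ⟨hS_eq ▸ Or.inr ha, fun (hav : a = v) => ?_⟩
    exact hTv v (hav ▸ ha) (self_mem_closedNbhd hv)
  · rintro S ⟨-, hvS⟩ T ⟨-, hvT⟩ hST
    rw [← Set.insert_sdiff_self_of_mem hvS, ← Set.insert_sdiff_self_of_mem hvT]
    exact congrArg (insert v) hST

/-- Moon–Moser for naive extensions. A self-attacking argument can be deleted. Otherwise every
naive extension meets the closed neighbourhood `N[v]` of an argument `v` with `|N[v]| = d`
minimal, and those containing `w ∈ N[v]` are, after removing `w`, naive extensions of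
`F - N[w]`; so there are at most `d * moonMoser (n - d)` of them. -/
theorem ncard_naive_le_moonMoser (F : AF) : F.naive.ncard ≤ moonMoser F.A.card := by
  induction hn : F.A.card using Nat.strong_induction_on generalizing F with
  | _ n ih =>
  have ih_del : ∀ X ⊆ F.A, X.Nonempty → (F.del X).naive.ncard ≤ moonMoser (n - X.card) :=
    fun X hX hne => ih _ (by have := Finset.card_le_card hX; have := hne.card_pos; omega) _
      (by rw [card_del_A hX, hn])
  rcases F.A.eq_empty_or_nonempty with hA | hA
  · have : F.naive ⊆ {∅} := fun S hS => Set.subset_empty_iff.1 (by simpa [hA] using hS.1.1)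
    simpa [← hn, hA, moonMoser] using Set.ncard_le_ncard this
  by_cases hloop : ∃ v ∈ F.A, (v, v) ∈ F.R
  · obtain ⟨v, hv, hvv⟩ := hloop
    have hsub : F.naive ⊆ (F.del {v}).naive := fun S hS =>
      mem_naive_del hS fun a ha hav => hS.1.2 a ha a ha (Finset.mem_singleton.1 hav ▸ hvv)
    calc F.naive.ncard ≤ (F.del {v}).naive.ncard := Set.ncard_le_ncard hsub (naive_finite _)
      _ ≤ moonMoser (n - 1) := ih_del {v} (by simpa using hv) (by simp)
      _ ≤ moonMoser n := moonMoser_monotone (Nat.sub_le n 1)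
  push Not at hloop
  obtain ⟨v, hv, hmin⟩ := F.A.exists_min_image (fun v => (F.closedNbhd v).card) hA
  set d := (F.closedNbhd v).card
  have hd : 1 ≤ d := Finset.card_pos.2 ⟨v, self_mem_closedNbhd hv⟩
  have hdn : d ≤ n := hn ▸ Finset.card_le_card closedNbhd_subset_A
  have hcover : F.naive ⊆ ⋃ w ∈ F.closedNbhd v, {S | S ∈ F.naive ∧ w ∈ S} := by
    intro S hS
    obtain ⟨w, hw, hwS⟩ := exists_mem_closedNbhd_of_mem_naive hv (hloop v hv) hS
    exact Set.mem_biUnion hw ⟨hS, hwS⟩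
  calc F.naive.ncard
      ≤ (⋃ w ∈ F.closedNbhd v, {S | S ∈ F.naive ∧ w ∈ S}).ncard :=
        Set.ncard_le_ncard hcover (F.naive_finite.subset (by simp +contextual [Set.subset_def]))
    _ ≤ ∑ w ∈ F.closedNbhd v, {S | S ∈ F.naive ∧ w ∈ S}.ncard :=
        Finset.set_ncard_biUnion_le _ _
    _ ≤ ∑ _w ∈ F.closedNbhd v, moonMoser (n - d) := Finset.sum_le_sum fun w hw => by
        have hwA := closedNbhd_subset_A hw
        calc _ ≤ (F.del (F.closedNbhd w)).naive.ncard := ncard_naive_mem_le_ncard_naive_del hwA (hloop w hwA)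
          _ ≤ moonMoser (n - (F.closedNbhd w).card) :=
            ih_del _ closedNbhd_subset_A ⟨w, self_mem_closedNbhd hwA⟩
          _ ≤ moonMoser (n - d) := moonMoser_monotone (Nat.sub_le_sub_left (hmin w hwA) n)
    _ = d * moonMoser (n - d) := by rw [Finset.sum_const, smul_eq_mul]
    _ ≤ moonMoser n := by simpa [Nat.sub_add_cancel hdn] using mul_moonMoser_le d (n - d) hd

end AF

section Cliques

open Function

variable {ι : Type*} {G : ι → Finset ℕ}

def transversal (G : ι → Finset ℕ) (c : ∀ i, G i) : Set ℕ := Set.range fun i => (c i : ℕ)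

lemma Pairwise.eq_of_mem_of_mem (hG : Pairwise (Disjoint on G)) {i j : ι} {a : ℕ}
    (hi : a ∈ G i) (hj : a ∈ G j) : i = j :=
  by_contra fun hij => Finset.disjoint_left.1 (hG hij) hi hj

lemma transversal_injective (hG : Pairwise (Disjoint on G)) : Injective (transversal G) := by
  intro c c' h
  funext i
  obtain ⟨j, hj⟩ : (c i : ℕ) ∈ transversal G c' := h ▸ ⟨i, rfl⟩
  have hji : j = i := hG.eq_of_mem_of_mem (hj ▸ (c' j).2) (c i).2
  exact Subtype.ext (hji ▸ hj).symm

variable [Fintype ι]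

def cliquesAF (G : ι → Finset ℕ) : AF where
  A := Finset.univ.biUnion G
  R := {p | p.1 ≠ p.2 ∧ ∃ i, p.1 ∈ G i ∧ p.2 ∈ G i}
  R_sub := fun _ ⟨_, i, h₁, h₂⟩ =>
    ⟨Finset.mem_biUnion.2 ⟨i, Finset.mem_univ i, h₁⟩,
      Finset.mem_biUnion.2 ⟨i, Finset.mem_univ i, h₂⟩⟩

lemma stb_cliquesAF (hG : Pairwise (Disjoint on G)) (hne : ∀ i, (G i).Nonempty) :
    (cliquesAF G).stb = Set.range (transversal G) := by
  ext S
  constructor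
  · rintro ⟨hcf, hstb⟩
    have hmeet : ∀ i, ∃ s ∈ S, s ∈ G i := fun i => by
      obtain ⟨x, hx⟩ := hne i
      by_cases hxS : x ∈ S
      · exact ⟨x, hxS, hx⟩
      obtain ⟨s, hs, -, j, hsj, hxj⟩ :=
        hstb x (Finset.mem_biUnion.2 ⟨i, Finset.mem_univ i, hx⟩) hxS
      exact ⟨s, hs, hG.eq_of_mem_of_mem hxj hx ▸ hsj⟩
    choose c hcS hcG using hmeet
    refine ⟨fun i => ⟨c i, hcG i⟩, Set.Subset.antisymm ?_ fun a ha => ?_⟩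
    · rintro _ ⟨i, rfl⟩
      exact hcS i
    · obtain ⟨i, -, hai⟩ := Finset.mem_biUnion.1 (hcf.1 ha)
      by_contra hna
      exact hcf.2 _ (hcS i) a ha ⟨fun h => hna ⟨i, h⟩, i, hcG i, hai⟩
  · rintro ⟨c, rfl⟩
    refine ⟨⟨?_, ?_⟩, fun a ha hna => ?_⟩
    · rintro _ ⟨i, rfl⟩
      exact Finset.mem_biUnion.2 ⟨i, Finset.mem_univ i, (c i).2⟩
    · rintro _ ⟨i, rfl⟩ _ ⟨j, rfl⟩ ⟨hij, k, hik, hjk⟩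
      exact hij (by rw [hG.eq_of_mem_of_mem (c i).2 hik, hG.eq_of_mem_of_mem (c j).2 hjk])
    · obtain ⟨i, -, hai⟩ := Finset.mem_biUnion.1 ha
      exact ⟨c i, ⟨i, rfl⟩, fun h => hna ⟨i, h⟩, i, (c i).2, hai⟩

theorem ncard_cliquesAF {σ : Semantics} (hσ : σ ∈ StandardSemantics)
    (hG : Pairwise (Disjoint on G)) (hne : ∀ i, (G i).Nonempty) :
    (σ (cliquesAF G)).ncard = ∏ i, (G i).card := by
  have hsymm : ∀ a b, (a, b) ∈ (cliquesAF G).R → (b, a) ∈ (cliquesAF G).R :=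
    fun _ _ ⟨hab, i, ha, hb⟩ => ⟨Ne.symm hab, i, hb, ha⟩
  have hirr : ∀ a, (a, a) ∉ (cliquesAF G).R := fun _ h => h.1 rfl
  have hstb : AF.stb ∈ StandardSemantics := Or.inr (Or.inl rfl)
  rw [AF.eq_naive_of_symm hσ hsymm hirr, ← AF.eq_naive_of_symm hstb hsymm hirr,
    stb_cliquesAF hG hne, ← Set.image_univ,
    Set.ncard_image_of_injective _ (transversal_injective hG), Set.ncard_univ, Nat.card_pi]
  simp

lemma card_cliquesAF (hG : Pairwise (Disjoint on G)) :
    (cliquesAF G).A.card = ∑ i, (G i).card :=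
  Finset.card_biUnion fun _ _ _ _ hij => hG hij

theorem exists_card_eq_sum_ncard_eq_prod [Encodable ι] {σ : Semantics}
    (hσ : σ ∈ StandardSemantics) (sz : ι → ℕ) (hsz : ∀ i, sz i ≠ 0) :
    ∃ F : AF, F.A.card = ∑ i, sz i ∧ (σ F).ncard = ∏ i, sz i := by
  set G : ι → Finset ℕ := fun i => (Finset.range (sz i)).image (Nat.pair (Encodable.encode i))
  have hG : Pairwise (Disjoint on G) := fun i j hij => Finset.disjoint_left.2 fun a hi hj => by
    obtain ⟨x, -, rfl⟩ := Finset.mem_image.1 hi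
    obtain ⟨y, -, hy⟩ := Finset.mem_image.1 hj
    exact hij (Encodable.encode_injective (Nat.pair_eq_pair.1 hy).1.symm)
  have hcard : ∀ i, (G i).card = sz i := fun i =>
    (Finset.card_image_of_injective _ fun x y h => (Nat.pair_eq_pair.1 h).2).trans
      (Finset.card_range _)
  have hne : ∀ i, (G i).Nonempty := fun i =>
    ⟨_, Finset.mem_image_of_mem _ (Finset.mem_range.2 (Nat.pos_of_ne_zero (hsz i)))⟩
  exact ⟨cliquesAF G, by simp only [card_cliquesAF hG, hcard],
    by simp only [ncard_cliquesAF hσ hG hne, hcard]⟩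

end Cliques

theorem exists_ncard_eq_moonMoser {σ : Semantics} (hσ : σ ∈ StandardSemantics) (n : ℕ) :
    ∃ F : AF, F.A.card = n ∧ (σ F).ncard = moonMoser n := by
  rcases eq_or_ne n 0 with rfl | hn
  · simpa [moonMoser] using exists_card_eq_sum_ncard_eq_prod hσ (Fin.elim0 : Fin 0 → ℕ) nofun
  obtain ⟨r, k, hr, rfl, hmm⟩ := exists_moonMoser_eq_mul_pow hn
  obtain ⟨F, hA, hσF⟩ := exists_card_eq_sum_ncard_eq_prod hσ (Fin.cons r fun _ : Fin k => 3)
    (Fin.cases hr fun _ => three_ne_zero)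
  refine ⟨F, ?_, ?_⟩
  · simpa [Fin.sum_cons, mul_comm] using hA
  · simpa [Fin.prod_cons, hmm] using hσF

theorem sigmaMax_eq_moonMoser {σ : Semantics} (hσ : σ ∈ StandardSemantics) (n : ℕ) :
    sigmaMax σ n = moonMoser n := by
  have hbdd : ∀ k ∈ {k | ∃ F : AF, F.A.card = n ∧ (σ F).ncard = k}, k ≤ moonMoser n := by
    rintro _ ⟨F, rfl, rfl⟩
    exact (AF.ncard_le_ncard_naive hσ F).trans F.ncard_naive_le_moonMoser
  obtain ⟨F, hA, hσF⟩ := exists_ncard_eq_moonMoser hσ n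
  exact (csSup_le' hbdd).antisymm (le_csSup ⟨_, hbdd⟩ ⟨F, hA, hσF⟩)

theorem sigmaMax_formula (σ : Semantics) (hσ : σ ∈ StandardSemantics) (n : ℕ) :
    ((n = 0 ∨ n = 1) → sigmaMax σ n = 1) ∧
    (∀ s, 2 ≤ n → n = 3 * s → sigmaMax σ n = 3 ^ s) ∧
    (∀ s, 2 ≤ n → n = 3 * s + 1 → sigmaMax σ n = 4 * 3 ^ (s - 1)) ∧
    (∀ s, 2 ≤ n → n = 3 * s + 2 → sigmaMax σ n = 2 * 3 ^ s) := by
  rw [sigmaMax_eq_moonMoser hσ]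
  refine ⟨?_, ?_, ?_, ?_⟩
  · rintro (rfl | rfl) <;> rfl
  · rintro s h rfl
    exact moonMoser_three_mul (by omega)
  · rintro s h rfl
    exact moonMoser_three_mul_add_one (by omega)
  · rintro s - rfl
    exact moonMoser_three_mul_add_two s
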